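/- arXiv:2311.14023 — 3 statements merged into one kernel-verified Lean document; each statement's English description precedes it below -/
import Mathlib

section
/- Let A and Â be n×n real SPSD matrices with A ⪰ Â ⪰ 0, let 1 ≤ k < n and ε ≥ 0, and suppose that ‖A‖_F² − ‖Â_(k)‖_F² ≤ (1+ε)‖A − A_(k)‖_F². Then for every continuous operator monotone function f : [0,∞) → [0,∞), ‖f(A) − f(Â)_(k)‖_F² ≤ (1+ε)‖f(A) − f(A)_(k)‖_F². -/
open Matrix BigOperators

/-- `M = U * diagonal μ * Uᵀ` is a spectral (eigen)decomposition of the symmetric matrix `M`,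
with orthogonal `U` and eigenvalues `μ` listed in nonincreasing order. -/
def IsSpectralDecomp {n : ℕ} (M U : Matrix (Fin n) (Fin n) ℝ) (μ : Fin n → ℝ) : Prop :=
  Uᵀ * U = 1 ∧ Antitone μ ∧ M = U * Matrix.diagonal μ * Uᵀ

/-- Truncation of a spectral decomposition to its `k` largest (first `k`) eigenvalues:
the best rank-`k` approximation `M_(k)` associated with the decomposition `(U, μ)`. -/
noncomputable def trunc {n : ℕ} (k : ℕ) (U : Matrix (Fin n) (Fin n) ℝ) (μ : Fin n → ℝ) :
    Matrix (Fin n) (Fin n) ℝ :=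
  U * Matrix.diagonal (fun i : Fin n => if (i : ℕ) < k then μ i else 0) * Uᵀ

/-- `f` is operator monotone on SPSD matrices: for all `m` and all `m × m` SPSD matrices
`B ⪰ C ⪰ 0`, one has `f(B) ⪰ f(C)`, where matrix functions are computed through (any)
spectral decomposition. -/
def OperatorMonotone (f : ℝ → ℝ) : Prop :=
  ∀ (m : ℕ) (B C U V : Matrix (Fin m) (Fin m) ℝ) (β γ : Fin m → ℝ),
    IsSpectralDecomp B U β → IsSpectralDecomp C V γ →
    B.PosSemidef → C.PosSemidef → (B - C).PosSemidef →
    (U * Matrix.diagonal (f ∘ β) * Uᵀ - V * Matrix.diagonal (f ∘ γ) * Vᵀ).PosSemidef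

/-- Squared Frobenius norm `‖M‖_F² = Σ_{i,j} M_{ij}²`. -/
noncomputable def frobSq {m l : ℕ} (M : Matrix (Fin m) (Fin l) ℝ) : ℝ :=
  ∑ i, ∑ j, (M i j) ^ 2

/-- Frobenius norm. -/
noncomputable def frobNorm {m l : ℕ} (M : Matrix (Fin m) (Fin l) ℝ) : ℝ :=
  Real.sqrt (frobSq M)

/-- The eigenvalues of a Hermitian matrix listed in nonincreasing order:
`eigsDesc hM i` is the `(i+1)`-st largest eigenvalue of `M`. -/
noncomputable def eigsDesc {m : ℕ} {M : Matrix (Fin m) (Fin m) ℝ} (hM : M.IsHermitian) :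
    Fin m → ℝ :=
  fun i => (hM.eigenvalues ∘ Tuple.sort hM.eigenvalues) i.rev

/-- The singular values of `M` in nonincreasing order: `svDesc M i` is the `(i+1)`-st largest
singular value of `M`, i.e. the square root of the `(i+1)`-st largest eigenvalue of `MᴴM`. -/
noncomputable def svDesc {m l : ℕ} (M : Matrix (Fin m) (Fin l) ℝ) : Fin l → ℝ :=
  fun i => Real.sqrt (eigsDesc (Matrix.isHermitian_conjTranspose_mul_self M) i)

/-- Nuclear norm: the sum of the singular values. -/
noncomputable def nuclearNorm {m l : ℕ} (M : Matrix (Fin m) (Fin l) ℝ) : ℝ :=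
  ∑ i, svDesc M i

/-- Operator (spectral) norm: the largest singular value. -/
noncomputable def opNorm {m l : ℕ} (M : Matrix (Fin m) (Fin l) ℝ) : ℝ :=
  ⨆ i, svDesc M i

/-- `p`-th power of the Schatten `p`-norm: `‖M‖_(p)^p = Σᵢ σᵢ(M)^p`. -/
noncomputable def schattenPow {m l : ℕ} (p : ℝ) (M : Matrix (Fin m) (Fin l) ℝ) : ℝ :=
  ∑ i, svDesc M i ^ p

/-- Schatten `p`-norm: `‖M‖_(p) = (Σᵢ σᵢ(M)^p)^(1/p)`. -/
noncomputable def schattenNorm {m l : ℕ} (p : ℝ) (M : Matrix (Fin m) (Fin l) ℝ) : ℝ :=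
  (schattenPow p M) ^ (1 / p)

/-- `P` is the orthogonal projection onto the column space of `M`. -/
def IsOrthProjOnto {m l : ℕ} (P : Matrix (Fin m) (Fin m) ℝ) (M : Matrix (Fin m) (Fin l) ℝ) :
    Prop :=
  Pᵀ = P ∧ P * P = P ∧ P * M = M ∧ ∃ Y : Matrix (Fin l) (Fin m) ℝ, P = M * Y


/-!
Put `P = f(Â)_(k)`. As `f(A) ⪰ f(Â)` and `P ⪰ 0`, `tr(f(A) P) ≥ tr(f(Â) P) = ‖P‖_F²`, hence
`‖f(A) - P‖_F² ≤ ‖f(A)‖_F² - ‖P‖_F²`, and with `μ`, `ν` the eigenvalues of `A`, `Â` everything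
reduces to passing from `∑_{i<k} (μᵢ² - νᵢ²) ≤ ε ∑_{i≥k} μᵢ²` (the hypothesis) to the same
inequality for `f(μᵢ)`, `f(νᵢ)`. Weyl's monotonicity gives `0 ≤ νᵢ ≤ μᵢ`, and operator
monotonicity makes `f(x)/x` nonincreasing (test `f` on `diag(Y, a) ⪰ b vvᵀ` and let `Y → ∞`).
Comparing every term with the single ratio `f(μₖ)/μₖ` at the threshold eigenvalue `μₖ` then
transfers the inequality.
-/

section Conjugation

variable {ι : Type*} [Fintype ι] [DecidableEq ι]

lemma dotProduct_conj_diagonal_mulVec (U : Matrix ι ι ℝ) (d x : ι → ℝ) :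
    x ⬝ᵥ ((U * diagonal d * Uᵀ) *ᵥ x) = ∑ j, d j * (Uᵀ *ᵥ x) j ^ 2 := by
  rw [← mulVec_mulVec, ← mulVec_mulVec, dotProduct_mulVec, ← mulVec_transpose,
    dotProduct_comm]
  simp only [dotProduct, mulVec_diagonal]
  exact Finset.sum_congr rfl fun j _ => by ring

lemma posSemidef_conj_diagonal (U : Matrix ι ι ℝ) {d : ι → ℝ} (hd : 0 ≤ d) :
    (U * diagonal d * Uᵀ).PosSemidef := by
  simpa using (PosSemidef.diagonal hd).mul_mul_conjTranspose_same U

lemma trace_conj_diagonal_mul_conj_diagonal {U : Matrix ι ι ℝ} (hU : Uᵀ * U = 1)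
    (d e : ι → ℝ) :
    ((U * diagonal d * Uᵀ) * (U * diagonal e * Uᵀ)).trace = ∑ i, d i * e i := by
  have hprod : (U * diagonal d * Uᵀ) * (U * diagonal e * Uᵀ) =
      U * diagonal (fun i => d i * e i) * Uᵀ := by
    simp only [Matrix.mul_assoc]
    rw [← Matrix.mul_assoc Uᵀ U, hU, Matrix.one_mul, ← Matrix.mul_assoc (diagonal d),
      diagonal_mul_diagonal]
  rw [hprod, trace_mul_cycle, hU, Matrix.one_mul, trace_diagonal]

lemma conj_diagonal_transpose (U : Matrix ι ι ℝ) (d : ι → ℝ) :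
    (U * diagonal d * Uᵀ)ᵀ = U * diagonal d * Uᵀ := by
  rw [transpose_mul, transpose_mul, transpose_transpose, diagonal_transpose, Matrix.mul_assoc]

open scoped MatrixOrder in
lemma Matrix.PosSemidef.trace_mul_nonneg {M N : Matrix ι ι ℝ} (hM : M.PosSemidef)
    (hN : N.PosSemidef) : 0 ≤ (M * N).trace := by
  have hsq : CFC.sqrt M * CFC.sqrt M = M := CFC.sqrt_mul_sqrt_self M hM.nonneg
  have hS : (CFC.sqrt M)ᴴ = CFC.sqrt M := (CFC.sqrt_nonneg M).posSemidef.1.eq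
  have h := (hN.mul_mul_conjTranspose_same (CFC.sqrt M)).trace_nonneg
  rwa [hS, trace_mul_cycle, hsq] at h

lemma sum_transpose_mulVec_sq {U : Matrix ι ι ℝ} (hU : Uᵀ * U = 1) (x : ι → ℝ) :
    ∑ j, (Uᵀ *ᵥ x) j ^ 2 = x ⬝ᵥ x := by
  have h := dotProduct_conj_diagonal_mulVec U (fun _ => 1) x
  rw [diagonal_one, Matrix.mul_one, mul_eq_one_comm.mp hU, one_mulVec] at h
  simpa using h.symm

lemma exists_ne_zero_mulVec_eq_zero_below_above [LinearOrder ι] (P Q : Matrix ι ι ℝ) (i : ι) :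
    ∃ x ≠ 0, (∀ j < i, (P *ᵥ x) j = 0) ∧ ∀ j, i < j → (Q *ᵥ x) j = 0 := by
  let L : (ι → ℝ) →ₗ[ℝ] ι → ℝ := LinearMap.pi fun j =>
    if j < i then LinearMap.proj j ∘ₗ toLin' P
    else if i < j then LinearMap.proj j ∘ₗ toLin' Q else 0
  have hL : ¬ Function.Surjective L := fun hL => by
    obtain ⟨x, hx⟩ := hL (Pi.single i 1)
    simpa [L] using congrFun hx i
  rw [← LinearMap.injective_iff_surjective, injective_iff_map_eq_zero] at hL
  push Not at hL
  obtain ⟨x, hLx, hx⟩ := hL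
  refine ⟨x, hx, fun j hj => ?_, fun j hj => ?_⟩
  · simpa [L, hj] using congrFun hLx j
  · simpa [L, hj, hj.not_gt] using congrFun hLx j

end Conjugation

namespace IsSpectralDecomp

variable {n : ℕ} {M U : Matrix (Fin n) (Fin n) ℝ} {μ : Fin n → ℝ}

lemma nonneg_of_posSemidef (h : IsSpectralDecomp M U μ) (hM : M.PosSemidef) : 0 ≤ μ := by
  have hconj : Uᵀ * M * U = diagonal μ := by
    rw [h.2.2, Matrix.mul_assoc, Matrix.mul_assoc, h.1, Matrix.mul_one, ← Matrix.mul_assoc, h.1,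
      Matrix.one_mul]
  have hpsd := hM.mul_mul_conjTranspose_same Uᵀ
  rw [conjTranspose_eq_transpose_of_trivial, transpose_transpose, hconj] at hpsd
  exact posSemidef_diagonal_iff.mp hpsd

lemma dotProduct_mulVec_le (h : IsSpectralDecomp M U μ) {i : Fin n} {x : Fin n → ℝ}
    (hx : ∀ j < i, (Uᵀ *ᵥ x) j = 0) : x ⬝ᵥ (M *ᵥ x) ≤ μ i * (x ⬝ᵥ x) := by
  rw [h.2.2, dotProduct_conj_diagonal_mulVec, ← sum_transpose_mulVec_sq h.1, Finset.mul_sum]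
  refine Finset.sum_le_sum fun j _ => ?_
  rcases lt_or_ge j i with hji | hij
  · simp [hx j hji]
  · exact mul_le_mul_of_nonneg_right (h.2.1 hij) (sq_nonneg _)

lemma le_dotProduct_mulVec (h : IsSpectralDecomp M U μ) {i : Fin n} {x : Fin n → ℝ}
    (hx : ∀ j, i < j → (Uᵀ *ᵥ x) j = 0) : μ i * (x ⬝ᵥ x) ≤ x ⬝ᵥ (M *ᵥ x) := by
  rw [h.2.2, dotProduct_conj_diagonal_mulVec, ← sum_transpose_mulVec_sq h.1, Finset.mul_sum]
  refine Finset.sum_le_sum fun j _ => ?_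
  rcases lt_or_ge i j with hij | hji
  · simp [hx j hij]
  · exact mul_le_mul_of_nonneg_right (h.2.1 hji) (sq_nonneg _)

/-- Weyl monotonicity: some `x ≠ 0` lies both in the span of the first `i + 1` eigenvectors of `N`
and in that of the last `n - i` eigenvectors of `M`, so `νᵢ‖x‖² ≤ xᵀNx ≤ xᵀMx ≤ μᵢ‖x‖²`. -/
theorem le_of_posSemidef_sub {N V : Matrix (Fin n) (Fin n) ℝ} {ν : Fin n → ℝ}
    (hM : IsSpectralDecomp M U μ) (hN : IsSpectralDecomp N V ν) (hMN : (M - N).PosSemidef)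
    (i : Fin n) : ν i ≤ μ i := by
  obtain ⟨x, hx0, hUx, hVx⟩ := exists_ne_zero_mulVec_eq_zero_below_above Uᵀ Vᵀ i
  have hx : 0 < x ⬝ᵥ x :=
    (dotProduct_star_self_nonneg x).lt_of_ne' (dotProduct_self_eq_zero.not.mpr hx0)
  have hquad := hMN.dotProduct_mulVec_nonneg x
  rw [star_trivial, sub_mulVec, dotProduct_sub, sub_nonneg] at hquad
  exact le_of_mul_le_mul_right
    ((hN.le_dotProduct_mulVec hVx).trans (hquad.trans (hM.dotProduct_mulVec_le hUx))) hx

end IsSpectralDecomp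

section Frobenius

variable {n : ℕ}

lemma frobSq_eq_trace_mul_transpose {m l : ℕ} (M : Matrix (Fin m) (Fin l) ℝ) :
    frobSq M = (M * Mᵀ).trace := by
  simp [frobSq, trace, mul_apply, sq]

lemma frobSq_sub {m l : ℕ} (M N : Matrix (Fin m) (Fin l) ℝ) :
    frobSq (M - N) = frobSq M - 2 * (M * Nᵀ).trace + frobSq N := by
  simp only [frobSq_eq_trace_mul_transpose, transpose_sub, Matrix.sub_mul, Matrix.mul_sub,
    trace_sub]
  rw [← trace_transpose (N * Mᵀ), transpose_mul, transpose_transpose]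
  ring

lemma frobSq_conj_diagonal {U : Matrix (Fin n) (Fin n) ℝ} (hU : Uᵀ * U = 1) (d : Fin n → ℝ) :
    frobSq (U * diagonal d * Uᵀ) = ∑ i, d i ^ 2 := by
  simp only [frobSq_eq_trace_mul_transpose, conj_diagonal_transpose,
    trace_conj_diagonal_mul_conj_diagonal hU, sq]

lemma frobSq_trunc {U : Matrix (Fin n) (Fin n) ℝ} (hU : Uᵀ * U = 1) (k : ℕ) (μ : Fin n → ℝ) :
    frobSq (trunc k U μ) = ∑ i ∈ {i : Fin n | (i : ℕ) < k}, μ i ^ 2 := by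
  rw [trunc, frobSq_conj_diagonal hU, Finset.sum_filter]
  exact Finset.sum_congr rfl fun i _ => by split_ifs <;> simp

lemma frobSq_conj_diagonal_sub_trunc {U : Matrix (Fin n) (Fin n) ℝ} (hU : Uᵀ * U = 1) (k : ℕ)
    (μ : Fin n → ℝ) :
    frobSq (U * diagonal μ * Uᵀ - trunc k U μ) = ∑ i ∈ {i : Fin n | ¬ (i : ℕ) < k}, μ i ^ 2 := by
  rw [trunc, ← sub_mul, ← mul_sub, diagonal_sub, frobSq_conj_diagonal hU, Finset.sum_filter]
  exact Finset.sum_congr rfl fun i _ => by split_ifs <;> simp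

lemma frobSq_sub_frobSq_trunc_le_iff {U V : Matrix (Fin n) (Fin n) ℝ} (hU : Uᵀ * U = 1)
    (hV : Vᵀ * V = 1) (k : ℕ) (μ ν : Fin n → ℝ) (ε : ℝ) :
    frobSq (U * diagonal μ * Uᵀ) - frobSq (trunc k V ν) ≤
        (1 + ε) * frobSq (U * diagonal μ * Uᵀ - trunc k U μ) ↔
      ∑ i ∈ {i : Fin n | (i : ℕ) < k}, (μ i ^ 2 - ν i ^ 2) ≤
        ε * ∑ i ∈ {i : Fin n | ¬ (i : ℕ) < k}, μ i ^ 2 := by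
  rw [frobSq_conj_diagonal hU, frobSq_trunc hV, frobSq_conj_diagonal_sub_trunc hU,
    ← Finset.sum_filter_add_sum_filter_not _ fun i : Fin n => (i : ℕ) < k,
    Finset.sum_sub_distrib]
  constructor <;> intro h <;> linarith

/-- `tr(X Y_(k)) ≥ tr(Y Y_(k)) = ‖Y_(k)‖_F²` for `Y = V diag(β) Vᵀ`, as `X - Y ⪰ 0` and
`Y_(k) ⪰ 0`. -/
lemma frobSq_sub_trunc_le {X V : Matrix (Fin n) (Fin n) ℝ} {β : Fin n → ℝ} (hV : Vᵀ * V = 1)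
    (hβ : 0 ≤ β) (hXY : (X - V * diagonal β * Vᵀ).PosSemidef) (k : ℕ) :
    frobSq (X - trunc k V β) ≤ frobSq X - frobSq (trunc k V β) := by
  set βk : Fin n → ℝ := fun i => if (i : ℕ) < k then β i else 0
  have hβk : 0 ≤ βk := fun i => by dsimp only [βk]; split_ifs; exacts [hβ i, le_rfl]
  have hcross : (V * diagonal β * Vᵀ * trunc k V β).trace = frobSq (trunc k V β) := by
    rw [trunc, trace_conj_diagonal_mul_conj_diagonal hV, frobSq_conj_diagonal hV]
    exact Finset.sum_congr rfl fun i _ => by split_ifs <;> ring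
  have hpos := hXY.trace_mul_nonneg (posSemidef_conj_diagonal V hβk)
  rw [sub_mul, trace_sub] at hpos
  rw [frobSq_sub, trunc, conj_diagonal_transpose]
  rw [trunc] at hcross
  linarith

end Frobenius

section ScalarTransfer

variable {f : ℝ → ℝ}

lemma sq_mul_sq_sub_sq_le (hf0 : ∀ x, 0 ≤ x → 0 ≤ f x)
    (hf : ∀ a b, 0 < a → a ≤ b → a * f b ≤ b * f a) {t x y : ℝ} (ht : 0 < t) (htx : t ≤ x)
    (hy : 0 ≤ y) (hyx : y ≤ x) :
    t ^ 2 * (f x ^ 2 - f y ^ 2) ≤ f t ^ 2 * (x ^ 2 - y ^ 2) := by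
  have hx : 0 < x := ht.trans_le htx
  have hfx := hf0 x hx.le
  have htx' : (t * f x) ^ 2 ≤ (x * f t) ^ 2 :=
    pow_le_pow_left₀ (by positivity) (hf t x ht htx) 2
  have hyx' : (y * f x) ^ 2 ≤ (x * f y) ^ 2 := by
    rcases hy.eq_or_lt with rfl | hy
    · simp [sq_nonneg]
    · exact pow_le_pow_left₀ (by positivity) (hf y x hy hyx) 2
  refine le_of_mul_le_mul_left ?_ (pow_pos hx 2)
  calc x ^ 2 * (t ^ 2 * (f x ^ 2 - f y ^ 2))
      ≤ (t * f x) ^ 2 * (x ^ 2 - y ^ 2) := by nlinarith [sq_nonneg t]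
    _ ≤ (x * f t) ^ 2 * (x ^ 2 - y ^ 2) :=
        mul_le_mul_of_nonneg_right htx' (by nlinarith)
    _ = x ^ 2 * (f t ^ 2 * (x ^ 2 - y ^ 2)) := by ring

lemma sq_mul_sq_le (hf0 : ∀ x, 0 ≤ x → 0 ≤ f x)
    (hf : ∀ a b, 0 < a → a ≤ b → a * f b ≤ b * f a) {t x : ℝ} (hx : 0 ≤ x) (hxt : x ≤ t) :
    f t ^ 2 * x ^ 2 ≤ t ^ 2 * f x ^ 2 := by
  rcases hx.eq_or_lt with rfl | hx
  · rw [zero_pow two_ne_zero, mul_zero]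
    positivity
  · rw [← mul_pow, ← mul_pow, mul_comm]
    exact pow_le_pow_left₀ (mul_nonneg hx.le (hf0 t (hx.le.trans hxt))) (hf x t hx hxt) 2

/-- `hf` says that `f(x)/x` is nonincreasing; every term is compared with the single ratio
`f(t)/t` at the threshold `t` between head and tail. -/
theorem sum_sq_sub_sq_le_of_sum_sq_sub_sq_le {ι : Type*} [Fintype ι] (p : ι → Prop)
    [DecidablePred p] (hf0 : ∀ x, 0 ≤ x → 0 ≤ f x)
    (hf : ∀ a b, 0 < a → a ≤ b → a * f b ≤ b * f a) {μ ν : ι → ℝ} {t ε : ℝ} (ht : 0 ≤ t)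
    (hε : 0 ≤ ε) (hν : 0 ≤ ν) (hνμ : ν ≤ μ) (hhead : ∀ i, p i → t ≤ μ i)
    (htail : ∀ i, ¬ p i → μ i ≤ t)
    (h : ∑ i with p i, (μ i ^ 2 - ν i ^ 2) ≤ ε * ∑ i with ¬ p i, μ i ^ 2) :
    ∑ i with p i, (f (μ i) ^ 2 - f (ν i) ^ 2) ≤ ε * ∑ i with ¬ p i, f (μ i) ^ 2 := by
  have hμ : 0 ≤ μ := hν.trans hνμ
  rcases ht.eq_or_lt with rfl | ht
  · have htail0 : ∑ i with ¬ p i, μ i ^ 2 = 0 :=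
      Finset.sum_eq_zero fun i hi => by
        rw [le_antisymm (htail i (Finset.mem_filter.1 hi).2) (hμ i)]; simp
    have hterm : ∀ i ∈ Finset.univ.filter p, 0 ≤ μ i ^ 2 - ν i ^ 2 := fun i _ =>
      sub_nonneg.2 (pow_le_pow_left₀ (hν i) (hνμ i) 2)
    have hhead0 := (Finset.sum_eq_zero_iff_of_nonneg hterm).1
      (le_antisymm (by simpa [htail0] using h) (Finset.sum_nonneg hterm))
    have hfhead0 : ∑ i with p i, (f (μ i) ^ 2 - f (ν i) ^ 2) = 0 :=
      Finset.sum_eq_zero fun i hi => by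
        rw [(pow_left_inj₀ (hμ i) (hν i) two_ne_zero).1 (sub_eq_zero.1 (hhead0 i hi)), sub_self]
    rw [hfhead0]
    exact mul_nonneg hε (Finset.sum_nonneg fun i _ => sq_nonneg _)
  · refine le_of_mul_le_mul_left ?_ (pow_pos ht 2)
    calc t ^ 2 * ∑ i with p i, (f (μ i) ^ 2 - f (ν i) ^ 2)
        ≤ ∑ i with p i, f t ^ 2 * (μ i ^ 2 - ν i ^ 2) := by
          rw [Finset.mul_sum]
          exact Finset.sum_le_sum fun i hi => sq_mul_sq_sub_sq_le hf0 hf ht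
            (hhead i (Finset.mem_filter.1 hi).2) (hν i) (hνμ i)
      _ ≤ f t ^ 2 * (ε * ∑ i with ¬ p i, μ i ^ 2) := by
          rw [← Finset.mul_sum]
          exact mul_le_mul_of_nonneg_left h (sq_nonneg _)
      _ = ε * ∑ i with ¬ p i, f t ^ 2 * μ i ^ 2 := by rw [← Finset.mul_sum]; ring
      _ ≤ ε * ∑ i with ¬ p i, t ^ 2 * f (μ i) ^ 2 := by
          refine mul_le_mul_of_nonneg_left (Finset.sum_le_sum fun i hi => ?_) hε
          exact sq_mul_sq_le hf0 hf (hμ i) (htail i (Finset.mem_filter.1 hi).2)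
      _ = t ^ 2 * (ε * ∑ i with ¬ p i, f (μ i) ^ 2) := by rw [← Finset.mul_sum]; ring

end ScalarTransfer

section PlaneRotation

def planeRotation (c s : ℝ) : Matrix (Fin 2) (Fin 2) ℝ :=
  !![c, -s; s, c]

variable {c s : ℝ}

lemma planeRotation_transpose_mul_self (h : c ^ 2 + s ^ 2 = 1) :
    (planeRotation c s)ᵀ * planeRotation c s = 1 := by
  ext i j
  fin_cases i <;> fin_cases j <;>
    simp [planeRotation, mul_apply, Fin.sum_univ_two] <;> grind

lemma dotProduct_planeRotation_conj_mulVec (d z : Fin 2 → ℝ) :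
    z ⬝ᵥ ((planeRotation c s * diagonal d * (planeRotation c s)ᵀ) *ᵥ z) =
      d 0 * (c * z 0 + s * z 1) ^ 2 + d 1 * (-s * z 0 + c * z 1) ^ 2 := by
  rw [dotProduct_conj_diagonal_mulVec, Fin.sum_univ_two]
  simp [planeRotation, mulVec, dotProduct, Fin.sum_univ_two]

lemma isSpectralDecomp_planeRotation (h : c ^ 2 + s ^ 2 = 1) {p q : ℝ} (hqp : q ≤ p) :
    IsSpectralDecomp (planeRotation c s * diagonal ![p, q] * (planeRotation c s)ᵀ)
      (planeRotation c s) ![p, q] := by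
  refine ⟨planeRotation_transpose_mul_self h, fun i j hij => ?_, rfl⟩
  fin_cases i <;> fin_cases j <;> simp_all

end PlaneRotation

lemma nonpos_of_forall_lt_mul_le {b g D : ℝ} (h : ∀ Y, b < Y → Y * g ≤ D) : g ≤ 0 := by
  by_contra! hg
  have hY := h (max (b + 1) (D / g + 1)) ((lt_add_one b).trans_le (le_max_left _ _))
  have hYg := mul_le_mul_of_nonneg_right (le_max_right (b + 1) (D / g + 1)) hg.le
  rw [add_mul, div_mul_cancel₀ _ hg.ne', one_mul] at hYg
  linarith

namespace OperatorMonotone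

variable {f : ℝ → ℝ}

lemma monotoneOn (hf : OperatorMonotone f) : MonotoneOn f (Set.Ici 0) := by
  intro a ha b hb hab
  have hdec (x : ℝ) : IsSpectralDecomp (diagonal fun _ : Fin 1 => x) 1 fun _ => x :=
    ⟨by simp, antitone_const, by simp⟩
  have h := hf 1 _ _ 1 1 _ _ (hdec b) (hdec a) (PosSemidef.diagonal fun _ => hb)
    (PosSemidef.diagonal fun _ => ha)
    (by rw [diagonal_sub]; exact PosSemidef.diagonal fun _ => sub_nonneg.2 hab)
  simp only [Matrix.one_mul, transpose_one, Matrix.mul_one, diagonal_sub] at h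
  simpa using posSemidef_diagonal_iff.1 h 0

/-- `diag(Y, a) ⪰ b vvᵀ` for the unit vector `v = (c, s)` as soon as `b (c²a + s²Y) = aY`. -/
lemma posSemidef_diagonal_sub_rankOne {a b Y : ℝ} (ha : 0 < a) (hY : 0 < Y) (hb : 0 ≤ b)
    (hcs : b * (c ^ 2 * a + s ^ 2 * Y) = a * Y) :
    (planeRotation 1 0 * diagonal ![Y, a] * (planeRotation 1 0)ᵀ -
      planeRotation c s * diagonal ![b, 0] * (planeRotation c s)ᵀ).PosSemidef := by
  refine PosSemidef.of_dotProduct_mulVec_nonneg ?_ fun z => ?_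
  · simp only [IsHermitian, conjTranspose_eq_transpose_of_trivial, transpose_sub,
      conj_diagonal_transpose]
  rw [star_trivial, sub_mulVec, dotProduct_sub, dotProduct_planeRotation_conj_mulVec,
    dotProduct_planeRotation_conj_mulVec]
  simp only [cons_val_zero, cons_val_one]
  -- Lagrange's identity for the Cauchy–Schwarz inequality `(v ⬝ z)² ≤ (v ⬝ D⁻¹ v)(z ⬝ D z)`.
  have hid : a * Y * (Y * z 0 ^ 2 + a * z 1 ^ 2 - b * (c * z 0 + s * z 1) ^ 2) =
      b * (s * Y * z 0 - c * a * z 1) ^ 2 := by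
    linear_combination (-(Y * z 0 ^ 2 + a * z 1 ^ 2)) * hcs
  have hQ : 0 ≤ Y * z 0 ^ 2 + a * z 1 ^ 2 - b * (c * z 0 + s * z 1) ^ 2 :=
    nonneg_of_mul_nonneg_right (by rw [hid]; positivity) (by positivity)
  linarith

/-- Evaluating `f(diag(Y, a)) ⪰ f(b vvᵀ) ⪰ f(b) vvᵀ` at `f(diag(Y, a))⁻¹ v`. -/
lemma apply_mul_le_of_posSemidef_sub_rankOne (hf : OperatorMonotone f)
    (hf0 : ∀ x, 0 ≤ x → 0 ≤ f x) {a b Y : ℝ} (ha : 0 ≤ a) (hb : 0 ≤ b) (haY : a ≤ Y)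
    (hcs : c ^ 2 + s ^ 2 = 1)
    (hsub : (planeRotation 1 0 * diagonal ![Y, a] * (planeRotation 1 0)ᵀ -
      planeRotation c s * diagonal ![b, 0] * (planeRotation c s)ᵀ).PosSemidef) :
    f b * (c ^ 2 * f a + s ^ 2 * f Y) ^ 2 ≤ f a * f Y * (c ^ 2 * f a + s ^ 2 * f Y) := by
  have h := hf 2 _ _ _ _ _ _ (isSpectralDecomp_planeRotation (by norm_num) haY)
    (isSpectralDecomp_planeRotation hcs hb)
    (posSemidef_conj_diagonal _ fun i => by fin_cases i <;> simp [ha, ha.trans haY])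
    (posSemidef_conj_diagonal _ fun i => by fin_cases i <;> simp [hb]) hsub
  have hz := h.dotProduct_mulVec_nonneg ![c * f a, s * f Y]
  rw [star_trivial, sub_mulVec, dotProduct_sub, dotProduct_planeRotation_conj_mulVec,
    dotProduct_planeRotation_conj_mulVec] at hz
  simp only [Function.comp_apply, cons_val_zero, cons_val_one] at hz
  nlinarith [mul_nonneg (hf0 0 le_rfl) (sq_nonneg (-s * (c * f a) + c * (s * f Y)))]

lemma mul_sub_mul_apply_le (hf : OperatorMonotone f) (hf0 : ∀ x, 0 ≤ x → 0 ≤ f x)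
    {a b Y : ℝ} (ha : 0 < a) (hab : a ≤ b) (hbY : b < Y) :
    a * (Y - b) * f b ≤ b * (Y - a) * f a := by
  have hb : 0 < b := ha.trans_le hab
  have hYa : 0 < Y - a := by linarith
  -- `w = s²` makes `diag(Y, a) - b vvᵀ` singular, the extreme admissible choice.
  obtain ⟨w, hw⟩ : ∃ w, w * (b * (Y - a)) = a * (Y - b) :=
    ⟨_, div_mul_cancel₀ _ (by positivity)⟩
  have hw0 : 0 < w := pos_of_mul_pos_left (hw ▸ mul_pos ha (by linarith)) (by positivity)
  have hw1 : w ≤ 1 := le_of_mul_le_mul_right (a := b * (Y - a))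
    (by rw [hw, one_mul]; nlinarith [mul_le_mul_of_nonneg_left hab (by linarith : 0 ≤ Y)])
    (by positivity)
  have hs : √w ^ 2 = w := Real.sq_sqrt hw0.le
  have hc : √(1 - w) ^ 2 = 1 - w := Real.sq_sqrt (by linarith)
  have hcs : √(1 - w) ^ 2 + √w ^ 2 = 1 := by rw [hs, hc]; ring
  have hmain := hf.apply_mul_le_of_posSemidef_sub_rankOne hf0 ha.le hb.le (Y := Y) (by linarith)
    hcs (posSemidef_diagonal_sub_rankOne ha (by linarith) hb.le
      (by rw [hs, hc]; linear_combination hw))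
  rw [hs, hc] at hmain
  rcases (hf0 b hb.le).eq_or_lt with hfb | hfb
  · rw [← hfb, mul_zero]
    exact mul_nonneg (by positivity) (hf0 a ha.le)
  have hfY : 0 < f Y :=
    hfb.trans_le (hf.monotoneOn (Set.mem_Ici.2 hb.le) (Set.mem_Ici.2 (by linarith)) hbY.le)
  set σ := (1 - w) * f a + w * f Y
  have hσ : w * f Y ≤ σ := by nlinarith [hf0 a ha.le]
  have hσfb : f b * σ ≤ f a * f Y :=
    le_of_mul_le_mul_right (by nlinarith) ((mul_pos hw0 hfY).trans_le hσ)
  have hwfb : f b * w ≤ f a :=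
    le_of_mul_le_mul_right (by nlinarith [mul_le_mul_of_nonneg_left hσ hfb.le]) hfY
  calc a * (Y - b) * f b = f b * w * (b * (Y - a)) := by rw [← hw]; ring
    _ ≤ f a * (b * (Y - a)) := mul_le_mul_of_nonneg_right hwfb (by positivity)
    _ = b * (Y - a) * f a := by ring

theorem mul_apply_le_mul_apply (hf : OperatorMonotone f) (hf0 : ∀ x, 0 ≤ x → 0 ≤ f x)
    {a b : ℝ} (ha : 0 < a) (hab : a ≤ b) : a * f b ≤ b * f a := by
  have h : a * f b - b * f a ≤ 0 := nonpos_of_forall_lt_mul_le (D := a * b * (f b - f a))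
    fun Y hY => by linarith [hf.mul_sub_mul_apply_le hf0 ha hab hY]
  linarith

end OperatorMonotone

theorem frobenius_nystrom_to_funNystrom_general
    (n k : ℕ) (hkn : k < n) (ε : ℝ) (hε : 0 ≤ ε)
    (A Ahat U V : Matrix (Fin n) (Fin n) ℝ) (μ ν : Fin n → ℝ)
    (hA : A.PosSemidef) (hAhat : Ahat.PosSemidef) (hAAhat : (A - Ahat).PosSemidef)
    (hdecA : IsSpectralDecomp A U μ) (hdecAhat : IsSpectralDecomp Ahat V ν)
    (hnear : frobSq A - frobSq (trunc k V ν) ≤ (1 + ε) * frobSq (A - trunc k U μ))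
    (f : ℝ → ℝ) (hfmono : OperatorMonotone f)
    (hfnn : ∀ x : ℝ, 0 ≤ x → 0 ≤ f x) :
    frobSq (U * Matrix.diagonal (f ∘ μ) * Uᵀ - trunc k V (f ∘ ν)) ≤
      (1 + ε) * frobSq (U * Matrix.diagonal (f ∘ μ) * Uᵀ - trunc k U (f ∘ μ)) := by
  have hν := hdecAhat.nonneg_of_posSemidef hAhat
  have hνμ := hdecA.le_of_posSemidef_sub hdecAhat hAAhat
  rw [hdecA.2.2, frobSq_sub_frobSq_trunc_le_iff hdecA.1 hdecAhat.1] at hnear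
  have hfnear := sum_sq_sub_sq_le_of_sum_sq_sub_sq_le _ hfnn
    (fun _ _ => hfmono.mul_apply_le_mul_apply hfnn) ((hν _).trans (hνμ ⟨k, hkn⟩)) hε hν hνμ
    (fun i hi => hdecA.2.1 (Fin.le_def.2 hi.le))
    (fun i hi => hdecA.2.1 (Fin.le_def.2 (not_lt.1 hi))) hnear
  calc frobSq (U * diagonal (f ∘ μ) * Uᵀ - trunc k V (f ∘ ν))
      ≤ frobSq (U * diagonal (f ∘ μ) * Uᵀ) - frobSq (trunc k V (f ∘ ν)) :=
        frobSq_sub_trunc_le hdecAhat.1 (fun i => hfnn _ (hν i))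
          (hfmono n A Ahat U V μ ν hdecA hdecAhat hA hAhat hAAhat) k
    _ ≤ (1 + ε) * frobSq (U * diagonal (f ∘ μ) * Uᵀ - trunc k U (f ∘ μ)) :=
        (frobSq_sub_frobSq_trunc_le_iff hdecA.1 hdecAhat.1 k _ _ ε).2 hfnear

/-- Frobenius-norm transfer theorem: if `A ⪰ Â ⪰ 0` and
`‖A‖_F² − ‖Â_(k)‖_F² ≤ (1+ε)‖A − A_(k)‖_F²`, then for every continuous operator monotone
`f : [0,∞) → [0,∞)`, `‖f(A) − f(Â)_(k)‖_F² ≤ (1+ε)‖f(A) − f(A)_(k)‖_F²`. -/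
theorem frobenius_nystrom_to_funNystrom
    (n k : ℕ) (hk : 1 ≤ k) (hkn : k < n) (ε : ℝ) (hε : 0 ≤ ε)
    (A Ahat U V : Matrix (Fin n) (Fin n) ℝ) (μ ν : Fin n → ℝ)
    (hA : A.PosSemidef) (hAhat : Ahat.PosSemidef) (hAAhat : (A - Ahat).PosSemidef)
    (hdecA : IsSpectralDecomp A U μ) (hdecAhat : IsSpectralDecomp Ahat V ν)
    (hnear : frobSq A - frobSq (trunc k V ν) ≤ (1 + ε) * frobSq (A - trunc k U μ))
    (f : ℝ → ℝ) (hfc : ContinuousOn f (Set.Ici 0)) (hfmono : OperatorMonotone f)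
    (hfnn : ∀ x : ℝ, 0 ≤ x → 0 ≤ f x) :
    frobSq (U * Matrix.diagonal (f ∘ μ) * Uᵀ - trunc k V (f ∘ ν)) ≤
      (1 + ε) * frobSq (U * Matrix.diagonal (f ∘ μ) * Uᵀ - trunc k U (f ∘ μ)) :=
  frobenius_nystrom_to_funNystrom_general n k hkn ε hε A Ahat U V μ ν hA hAhat hAAhat hdecA hdecAhat
    hnear f hfmono hfnn
end

section
/- Let B be an n×n real SPSD matrix of rank r, and let f : [0,∞) → [0,∞) be nondecreasing. Set g(x) := f(x) − f(0) and let P_B denote the orthogonal projection onto the column space of B. Then the matrix g(B) + f(0)·P_B has rank at most r, it equals a best rank-r approximation f(B)_(r) of f(B) obtained by truncating the spectral decomposition of f(B) to its r largest eigenvalues, and ‖f(B) − (g(B) + f(0)·P_B)‖₂ = f(0), which is the (r+1)-st largest eigenvalue of f(B). -/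
open Matrix BigOperators

/-! Diagonalize `B = V diag(β) Vᵀ`. Since `β` is nonnegative and nonincreasing, `β i ≠ 0` exactly
for `i < r`, so `P_B = V diag(1_{i<r}) Vᵀ` and, in these coordinates, `g(B) + f(0)·P_B` keeps the
first `r` eigenvalues `f(β i)` of `f(B)` and zeroes the rest, which all equal `f(0)`. The residual
`f(B) − (g(B) + f(0)·P_B)` is therefore `f(0)` times a nonzero orthogonal projection, whose squared
singular values lie in the spectrum `{0, f(0)²}` and attain `f(0)²`. -/

open Polynomial in
theorem spectrum_subset_of_mul_self_eq_smul {𝕜 A : Type*} [Field 𝕜] [Ring A] [Algebra 𝕜 A]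
    {a : A} {c : 𝕜} (h : a * a = c • a) : spectrum 𝕜 a ⊆ {0, c} := by
  nontriviality A
  refine (Set.image_subset_iff.mp (spectrum.subset_polynomial_aeval a (X ^ 2 - C c * X))).trans ?_
  intro s hs
  have hs' : s * (s - c) = 0 := by
    simpa [pow_two, h, mul_sub, sub_mul, mul_comm c s, Algebra.smul_def] using hs
  rcases mul_eq_zero.mp hs' with h0 | hc
  · exact Or.inl h0
  · exact Or.inr (sub_eq_zero.mp hc)

theorem IsIdempotentElem.mem_spectrum_smul {𝕜 A : Type*} [Field 𝕜] [Ring A] [Algebra 𝕜 A]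
    {p : A} (hp : IsIdempotentElem p) (hp0 : p ≠ 0) (t : 𝕜) : t ∈ spectrum 𝕜 (t • p) := by
  rw [spectrum.mem_iff, Algebra.algebraMap_eq_smul_one, ← smul_sub]
  intro hu
  refine hp0 (hu.mul_left_eq_zero.mp ?_)
  rw [mul_smul_comm, mul_sub, mul_one, hp.eq, sub_self, smul_zero]

theorem range_eigsDesc {m : ℕ} {M : Matrix (Fin m) (Fin m) ℝ} (hM : M.IsHermitian) :
    Set.range (eigsDesc hM) = spectrum ℝ M := by
  change Set.range ((hM.eigenvalues ∘ Tuple.sort hM.eigenvalues) ∘ Fin.rev) = _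
  rw [hM.spectrum_real_eq_range_eigenvalues, Fin.rev_surjective.range_comp,
    (Tuple.sort hM.eigenvalues).surjective.range_comp]

theorem opNorm_eq_sSup {m l : ℕ} (M : Matrix (Fin m) (Fin l) ℝ) :
    opNorm M = sSup (Real.sqrt '' spectrum ℝ (Mᴴ * M)) := by
  rw [opNorm, iSup, ← range_eigsDesc (isHermitian_conjTranspose_mul_self M), ← Set.range_comp]
  rfl

theorem opNorm_smul_of_isIdempotentElem {m : ℕ} {Q : Matrix (Fin m) (Fin m) ℝ} (hQt : Qᵀ = Q)
    (hQ : IsIdempotentElem Q) (hQ0 : Q ≠ 0) {c : ℝ} (hc : 0 ≤ c) : opNorm (c • Q) = c := by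
  have hsq : (c • Q)ᴴ * (c • Q) = c ^ 2 • Q := by
    rw [conjTranspose_eq_transpose_of_trivial, transpose_smul, hQt, smul_mul_smul_comm, hQ.eq, sq]
  have hspec : spectrum ℝ (c ^ 2 • Q) ⊆ {0, c ^ 2} :=
    spectrum_subset_of_mul_self_eq_smul (by rw [smul_mul_smul_comm, hQ.eq, smul_smul])
  rw [opNorm_eq_sSup, hsq]
  refine IsGreatest.csSup_eq ⟨⟨c ^ 2, hQ.mem_spectrum_smul hQ0 _, Real.sqrt_sq hc⟩, ?_⟩
  rintro _ ⟨s, hs, rfl⟩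
  rcases hspec hs with rfl | rfl
  · simpa using hc
  · rw [Real.sqrt_sq hc]

theorem Fin.lt_card_iff_of_antitone {m : ℕ} {p : Fin m → Prop} [DecidablePred p]
    (hp : Antitone p) (i : Fin m) : p i ↔ (i : ℕ) < Fintype.card {j // p j} := by
  rw [Fintype.card_subtype]
  constructor
  · intro hi
    have hle : Finset.Iic i ⊆ ({j | p j} : Finset (Fin m)) := fun j hj =>
      Finset.mem_filter.mpr ⟨Finset.mem_univ j, hp (Finset.mem_Iic.mp hj) hi⟩
    have := Finset.card_le_card hle
    rw [Fin.card_Iic] at this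
    omega
  · intro hlt
    by_contra hi
    have hle : ({j | p j} : Finset (Fin m)) ⊆ Finset.Iio i := fun j hj =>
      Finset.mem_Iio.mpr (lt_of_not_ge fun hij => hi (hp hij (Finset.mem_filter.mp hj).2))
    have := Finset.card_le_card hle
    rw [Fin.card_Iio] at this
    omega

theorem rank_trunc_le {n : ℕ} (k : ℕ) (U : Matrix (Fin n) (Fin n) ℝ) (μ : Fin n → ℝ) :
    (trunc k U μ).rank ≤ k := by
  refine ((rank_mul_le_left _ _).trans (rank_mul_le_right _ _)).trans ?_
  rw [rank_diagonal]
  have hlt : ∀ i : Fin n, (if (i : ℕ) < k then μ i else 0) ≠ 0 → (i : ℕ) < k := fun i hi => by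
    by_contra h
    exact hi (if_neg h)
  simpa using Fintype.card_le_of_injective
    (fun i : {i : Fin n // (if (i : ℕ) < k then μ i else 0) ≠ 0} => (⟨i.1, hlt i.1 i.2⟩ : Fin k))
    fun i j hij => Subtype.ext (Fin.ext (Fin.mk.inj hij))

section OrthogonalConj

variable {n : ℕ} {V : Matrix (Fin n) (Fin n) ℝ}

theorem transpose_conj_diagonal (a : Fin n → ℝ) :
    (V * diagonal a * Vᵀ)ᵀ = V * diagonal a * Vᵀ := by
  simp [transpose_mul, Matrix.mul_assoc]

theorem conj_diagonal_add (a b : Fin n → ℝ) :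
    V * diagonal a * Vᵀ + V * diagonal b * Vᵀ = V * diagonal (a + b) * Vᵀ := by
  rw [← Matrix.add_mul, ← Matrix.mul_add, diagonal_add]
  rfl

theorem conj_diagonal_sub (a b : Fin n → ℝ) :
    V * diagonal a * Vᵀ - V * diagonal b * Vᵀ = V * diagonal (a - b) * Vᵀ := by
  rw [← Matrix.sub_mul, ← Matrix.mul_sub, diagonal_sub]
  rfl

theorem smul_conj_diagonal (c : ℝ) (a : Fin n → ℝ) :
    c • (V * diagonal a * Vᵀ) = V * diagonal (c • a) * Vᵀ := by
  rw [diagonal_smul, Matrix.mul_smul, Matrix.smul_mul]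

variable (hV : Vᵀ * V = 1)
include hV

theorem conj_diagonal_mul_conj_diagonal (a b : Fin n → ℝ) :
    V * diagonal a * Vᵀ * (V * diagonal b * Vᵀ) = V * diagonal (a * b) * Vᵀ := by
  rw [show V * diagonal a * Vᵀ * (V * diagonal b * Vᵀ) =
      V * (diagonal a * (Vᵀ * V) * diagonal b) * Vᵀ by simp only [Matrix.mul_assoc],
    hV, Matrix.mul_one, diagonal_mul_diagonal]
  rfl

theorem rank_conj_diagonal (a : Fin n → ℝ) :
    (V * diagonal a * Vᵀ).rank = Fintype.card {i // a i ≠ 0} := by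
  rw [rank_mul_eq_left_of_isUnit_det _ _ (isUnit_det_of_right_inverse hV),
    rank_mul_eq_right_of_isUnit_det _ _ (isUnit_det_of_left_inverse hV), rank_diagonal]

theorem nonneg_of_posSemidef_conj_diagonal {a : Fin n → ℝ}
    (ha : (V * diagonal a * Vᵀ).PosSemidef) (i : Fin n) : 0 ≤ a i := by
  have h := ha.conjTranspose_mul_mul_same V
  rw [conjTranspose_eq_transpose_of_trivial,
    show Vᵀ * (V * diagonal a * Vᵀ) * V = Vᵀ * V * diagonal a * (Vᵀ * V) by
      simp only [Matrix.mul_assoc], hV, Matrix.one_mul, Matrix.mul_one] at h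
  exact posSemidef_diagonal_iff.mp h i

theorem isIdempotentElem_conj_diagonal_indicator (p : Fin n → Prop) [DecidablePred p] :
    IsIdempotentElem (V * diagonal (fun i => if p i then (1 : ℝ) else 0) * Vᵀ) := by
  rw [IsIdempotentElem, conj_diagonal_mul_conj_diagonal hV]
  refine congrArg (fun d => V * diagonal d * Vᵀ) (funext fun i => ?_)
  by_cases h : p i <;> simp [h]

theorem conj_diagonal_indicator_ne_zero {p : Fin n → Prop} [DecidablePred p] {i : Fin n}
    (hi : p i) : V * diagonal (fun j => if p j then (1 : ℝ) else 0) * Vᵀ ≠ 0 := by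
  intro h
  have hcard := rank_conj_diagonal hV (fun j => if p j then (1 : ℝ) else 0)
  rw [h, rank_zero, eq_comm, Fintype.card_eq_zero_iff] at hcard
  exact hcard.false ⟨i, by simp [hi]⟩

/-- The junk value `0⁻¹ = 0` makes `diag(β⁻¹)` the pseudo-inverse of `diag(β)`. -/
theorem isOrthProjOnto_conj_diagonal (β : Fin n → ℝ) :
    IsOrthProjOnto (V * diagonal (fun i => if β i ≠ 0 then (1 : ℝ) else 0) * Vᵀ)
      (V * diagonal β * Vᵀ) := by
  refine ⟨transpose_conj_diagonal _, isIdempotentElem_conj_diagonal_indicator hV _, ?_,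
    V * diagonal β⁻¹ * Vᵀ, ?_⟩
  all_goals
    rw [conj_diagonal_mul_conj_diagonal hV]
    refine congrArg (fun d => V * diagonal d * Vᵀ) (funext fun i => ?_)
    by_cases h : β i = 0 <;> simp [h]

end OrthogonalConj

theorem IsOrthProjOnto.unique {m l : ℕ} {P Q : Matrix (Fin m) (Fin m) ℝ}
    {M : Matrix (Fin m) (Fin l) ℝ} (hP : IsOrthProjOnto P M) (hQ : IsOrthProjOnto Q M) :
    P = Q := by
  obtain ⟨hPt, -, hPM, Y, hPY⟩ := hP
  obtain ⟨hQt, -, hQM, Z, hQZ⟩ := hQ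
  calc P = Pᵀ := hPt.symm
    _ = (Q * P)ᵀ := by rw [hPY, ← Matrix.mul_assoc, hQM]
    _ = P * Q := by rw [transpose_mul, hPt, hQt]
    _ = Q := by rw [hQZ, ← Matrix.mul_assoc, hPM]

theorem funNystrom_best_rank_r_general
    (n : ℕ) (B V : Matrix (Fin n) (Fin n) ℝ) (β : Fin n → ℝ)
    (hB : B.PosSemidef) (hdec : IsSpectralDecomp B V β)
    (r : ℕ) (hr : r = B.rank) (hrn : r < n)
    (f : ℝ → ℝ) (hfnn : ∀ x : ℝ, 0 ≤ x → 0 ≤ f x)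
    (g : ℝ → ℝ) (hg : g = fun x => f x - f 0)
    (P : Matrix (Fin n) (Fin n) ℝ) (hP : IsOrthProjOnto P B) :
    (V * Matrix.diagonal (g ∘ β) * Vᵀ + f 0 • P).rank ≤ r ∧
    V * Matrix.diagonal (g ∘ β) * Vᵀ + f 0 • P = trunc r V (f ∘ β) ∧
    opNorm (V * Matrix.diagonal (f ∘ β) * Vᵀ -
      (V * Matrix.diagonal (g ∘ β) * Vᵀ + f 0 • P)) = f 0 ∧
    f 0 = f (β ⟨r, hrn⟩) := by
  obtain ⟨hV, hβanti, rfl⟩ := hdec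
  have hβ : ∀ i : Fin n, β i ≠ 0 ↔ (i : ℕ) < r := by
    rw [hr, rank_conj_diagonal hV]
    refine Fin.lt_card_iff_of_antitone fun i j hij hj hi => hj ?_
    exact le_antisymm (hi ▸ hβanti hij) (nonneg_of_posSemidef_conj_diagonal hV hB j)
  have hβ0 : ∀ i : Fin n, ¬(i : ℕ) < r → β i = 0 := fun i hi => not_not.mp (mt (hβ i).mp hi)
  have htrunc : V * diagonal (g ∘ β) * Vᵀ + f 0 • P = trunc r V (f ∘ β) := by
    rw [hP.unique (isOrthProjOnto_conj_diagonal hV β), smul_conj_diagonal, conj_diagonal_add]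
    refine congrArg (fun d => V * diagonal d * Vᵀ) (funext fun i => ?_)
    by_cases hi : (i : ℕ) < r
    · simp [hg, hi, (hβ i).mpr hi]
    · simp [hg, hi, hβ0 i hi]
  have hresidual : V * diagonal (f ∘ β) * Vᵀ - trunc r V (f ∘ β) =
      f 0 • (V * diagonal (fun i : Fin n => if ¬(i : ℕ) < r then 1 else 0) * Vᵀ) := by
    unfold trunc
    rw [conj_diagonal_sub, smul_conj_diagonal]
    refine congrArg (fun d => V * diagonal d * Vᵀ) (funext fun i => ?_)
    by_cases hi : (i : ℕ) < r
    · simp [hi]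
    · simp [hi, hβ0 i hi]
  refine ⟨htrunc ▸ rank_trunc_le r V _, htrunc, ?_, by rw [hβ0 ⟨r, hrn⟩ (lt_irrefl r)]⟩
  rw [htrunc, hresidual]
  exact opNorm_smul_of_isIdempotentElem (transpose_conj_diagonal _)
    (isIdempotentElem_conj_diagonal_indicator hV _)
    (conj_diagonal_indicator_ne_zero hV (i := ⟨r, hrn⟩) (lt_irrefl r)) (hfnn 0 le_rfl)

/-- For an SPSD matrix `B` of rank `r < n` and a nondecreasing
`f : [0,∞) → [0,∞)`, with `g(x) = f(x) − f(0)` and `P_B` the orthogonal projection onto the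
column space of `B`, the matrix `g(B) + f(0)·P_B` has rank at most `r`, equals the best rank-`r`
approximation of `f(B)` obtained by truncating the spectral decomposition of `f(B)` to its `r`
largest eigenvalues, and `‖f(B) − (g(B) + f(0)·P_B)‖₂ = f(0)`, which is the `(r+1)`-st largest
eigenvalue of `f(B)`. -/
theorem funNystrom_best_rank_r
    (n : ℕ) (B V : Matrix (Fin n) (Fin n) ℝ) (β : Fin n → ℝ)
    (hB : B.PosSemidef) (hdec : IsSpectralDecomp B V β)
    (r : ℕ) (hr : r = B.rank) (hrn : r < n)
    (f : ℝ → ℝ) (hfmono : MonotoneOn f (Set.Ici 0)) (hfnn : ∀ x : ℝ, 0 ≤ x → 0 ≤ f x)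
    (g : ℝ → ℝ) (hg : g = fun x => f x - f 0)
    (P : Matrix (Fin n) (Fin n) ℝ) (hP : IsOrthProjOnto P B) :
    (V * Matrix.diagonal (g ∘ β) * Vᵀ + f 0 • P).rank ≤ r ∧
    V * Matrix.diagonal (g ∘ β) * Vᵀ + f 0 • P = trunc r V (f ∘ β) ∧
    opNorm (V * Matrix.diagonal (f ∘ β) * Vᵀ -
      (V * Matrix.diagonal (g ∘ β) * Vᵀ + f 0 • P)) = f 0 ∧
    f 0 = f (β ⟨r, hrn⟩) :=
  funNystrom_best_rank_r_general n B V β hB hdec r hr hrn f hfnn g hg P hP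
end

section
/- Let B ∈ ℝ^{n×n}, let Q ∈ ℝ^{n×ℓ} satisfy QᵀQ = I_ℓ, and let C ∈ ℝ^{ℓ×ℓ} be arbitrary. Then ‖B − QCQᵀ‖_F² = ‖B − QQᵀBQQᵀ‖_F² + ‖QᵀBQ − C‖_F². Consequently, among all matrices of the form QCQᵀ with rank(C) ≤ k, the Frobenius distance ‖B − QCQᵀ‖_F is minimized by C = (QᵀBQ)_(k), a best rank-k approximation of QᵀBQ. -/
open Matrix BigOperators

/-! Writing `B - QCQᵀ = (B - QQᵀBQQᵀ) + Q(QᵀBQ - C)Qᵀ`, the first summand is killed by the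
compression `X ↦ QᵀXQ`, which is the adjoint of `Y ↦ QYQᵀ` for the trace inner product, so the
two summands are orthogonal; and `Y ↦ QYQᵀ` is a Frobenius isometry since `QᵀQ = I`. The
minimization claim follows because the first summand does not depend on `C`. -/

section Frobenius

variable {m n l : ℕ}

lemma frobSq_eq_trace_transpose_mul (M : Matrix (Fin m) (Fin l) ℝ) :
    frobSq M = (Mᵀ * M).trace := by
  simp only [frobSq, trace, diag, mul_apply, transpose_apply, sq]
  rw [Finset.sum_comm]

lemma frobSq_nonneg (M : Matrix (Fin m) (Fin l) ℝ) : 0 ≤ frobSq M :=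
  Finset.sum_nonneg fun _ _ => Finset.sum_nonneg fun _ _ => sq_nonneg _

lemma frobNorm_le_frobNorm_iff (X : Matrix (Fin m) (Fin l) ℝ) (Y : Matrix (Fin n) (Fin l) ℝ) :
    frobNorm X ≤ frobNorm Y ↔ frobSq X ≤ frobSq Y :=
  Real.sqrt_le_sqrt_iff (frobSq_nonneg Y)

lemma frobSq_add_of_trace_transpose_mul_eq_zero {X Y : Matrix (Fin m) (Fin l) ℝ}
    (h : (Xᵀ * Y).trace = 0) : frobSq (X + Y) = frobSq X + frobSq Y := by
  have h' : (Yᵀ * X).trace = 0 := by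
    rw [← trace_transpose, transpose_mul, transpose_transpose, h]
  simp only [frobSq_eq_trace_transpose_mul, transpose_add, Matrix.add_mul, Matrix.mul_add,
    trace_add, h, h']
  ring

lemma frobSq_mul_of_transpose_mul_self_eq_one {Q : Matrix (Fin m) (Fin n) ℝ}
    (hQ : Qᵀ * Q = 1) (Y : Matrix (Fin n) (Fin l) ℝ) : frobSq (Q * Y) = frobSq Y := by
  rw [frobSq_eq_trace_transpose_mul, frobSq_eq_trace_transpose_mul, transpose_mul,
    Matrix.mul_assoc, ← Matrix.mul_assoc Qᵀ, hQ, Matrix.one_mul]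

lemma frobSq_mul_transpose_of_transpose_mul_self_eq_one {Q : Matrix (Fin m) (Fin n) ℝ}
    (hQ : Qᵀ * Q = 1) (Y : Matrix (Fin l) (Fin n) ℝ) : frobSq (Y * Qᵀ) = frobSq Y := by
  rw [frobSq_eq_trace_transpose_mul, frobSq_eq_trace_transpose_mul, transpose_mul,
    transpose_transpose, Matrix.mul_assoc, trace_mul_comm, Matrix.mul_assoc, Matrix.mul_assoc, hQ,
    Matrix.mul_one]

end Frobenius

section Compression

variable {n l : ℕ}

lemma trace_transpose_mul_conj (E : Matrix (Fin n) (Fin n) ℝ) (Q : Matrix (Fin n) (Fin l) ℝ)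
    (Y : Matrix (Fin l) (Fin l) ℝ) : (Eᵀ * (Q * Y * Qᵀ)).trace = ((Qᵀ * E * Q)ᵀ * Y).trace := by
  rw [← Matrix.mul_assoc, trace_mul_comm, transpose_mul, transpose_mul, transpose_transpose]
  simp only [Matrix.mul_assoc]

lemma compress_sub_conj_compress {Q : Matrix (Fin n) (Fin l) ℝ} (hQ : Qᵀ * Q = 1)
    (B : Matrix (Fin n) (Fin n) ℝ) : Qᵀ * (B - Q * Qᵀ * B * Q * Qᵀ) * Q = 0 := by
  have h : Qᵀ * (Q * Qᵀ * B * Q * Qᵀ) * Q = Qᵀ * B * Q := by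
    simp only [← Matrix.mul_assoc, hQ, Matrix.one_mul]
    simp only [Matrix.mul_assoc, hQ, Matrix.mul_one]
  rw [Matrix.mul_sub, Matrix.sub_mul, h, sub_self]

theorem frobSq_sub_conj {Q : Matrix (Fin n) (Fin l) ℝ} (hQ : Qᵀ * Q = 1)
    (B : Matrix (Fin n) (Fin n) ℝ) (C : Matrix (Fin l) (Fin l) ℝ) :
    frobSq (B - Q * C * Qᵀ) =
      frobSq (B - Q * Qᵀ * B * Q * Qᵀ) + frobSq (Qᵀ * B * Q - C) := by
  have hsplit : B - Q * C * Qᵀ =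
      (B - Q * Qᵀ * B * Q * Qᵀ) + Q * (Qᵀ * B * Q - C) * Qᵀ := by
    simp only [Matrix.mul_sub, Matrix.sub_mul, Matrix.mul_assoc]
    abel
  have horth : ((B - Q * Qᵀ * B * Q * Qᵀ)ᵀ * (Q * (Qᵀ * B * Q - C) * Qᵀ)).trace = 0 := by
    rw [trace_transpose_mul_conj, compress_sub_conj_compress hQ, transpose_zero,
      Matrix.zero_mul, trace_zero]
  rw [hsplit, frobSq_add_of_trace_transpose_mul_eq_zero horth,
    frobSq_mul_transpose_of_transpose_mul_self_eq_one hQ,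
    frobSq_mul_of_transpose_mul_self_eq_one hQ]

end Compression

/-- Pythagorean identity for two-sided compressions: for any `B`, any `Q`
with orthonormal columns, and any `C`, `‖B − QCQᵀ‖_F² = ‖B − QQᵀBQQᵀ‖_F² + ‖QᵀBQ − C‖_F²`.
Consequently, among all `QCQᵀ` with `rank C ≤ k`, the Frobenius distance to `B` is minimized
by taking `C` to be a best rank-`k` approximation of `QᵀBQ`. -/
theorem two_sided_pythagoras
    (n l k : ℕ) (B : Matrix (Fin n) (Fin n) ℝ) (Q : Matrix (Fin n) (Fin l) ℝ)
    (hQ : Qᵀ * Q = 1) :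
    (∀ C : Matrix (Fin l) (Fin l) ℝ,
      frobSq (B - Q * C * Qᵀ) =
        frobSq (B - Q * Qᵀ * B * Q * Qᵀ) + frobSq (Qᵀ * B * Q - C)) ∧
    (∀ Ck : Matrix (Fin l) (Fin l) ℝ,
      (Ck.rank ≤ k ∧ ∀ D : Matrix (Fin l) (Fin l) ℝ, D.rank ≤ k →
        frobNorm (Qᵀ * B * Q - Ck) ≤ frobNorm (Qᵀ * B * Q - D)) →
      ∀ D : Matrix (Fin l) (Fin l) ℝ, D.rank ≤ k →
        frobNorm (B - Q * Ck * Qᵀ) ≤ frobNorm (B - Q * D * Qᵀ)) := by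
  refine ⟨frobSq_sub_conj hQ B, fun Ck ⟨_, hbest⟩ D hD => ?_⟩
  have hcompressed := (frobNorm_le_frobNorm_iff _ _).1 (hbest D hD)
  rw [frobNorm_le_frobNorm_iff, frobSq_sub_conj hQ B Ck, frobSq_sub_conj hQ B D]
  linarith
end
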